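/- Let F ⊆ C be a set (the free space), let ρ > 0, and let γ : [0,1] → C be a continuous path with γ(0) = p, γ(1) = q, with clearance ρ (i.e., closedBall (γ t) ρ ⊆ F for every t ∈ [0,1]) and with length at most L (i.e., eVariationOn γ [0,1] ≤ L for some real L > 0). Let μ and ν be Borel probability measures on A and B respectively, and suppose there are constants α, β ∈ (0,1] such that μ(closedBall (γ t)_A (ρ/√2)) ≥ α for every t ∈ [0,1], and ν(closedBall (γ t)_B (ρ/√2) ∩ closedBall (γ s)_B (ρ/√2)) ≥ β for all t, s ∈ [0,1] with dist(γ t, γ s) ≤ ρ. Consider the product probability space Ω = (Fin n_A → A) × (Fin n_B → B) with the i.i.d. product measure P of μ and ν. Then there exists a measurable event E ⊆ Ω with P(E) ≥ 1 − ⌈L/ρ⌉·((1 − α)^{n_A} + (1 − β)^{n_B}) such that for every sample (a, b) ∈ E there exists a continuous path δ : [0,1] → C from p to q whose image is contained in F ∩ (m(p_A) ∪ m(q_A) ∪ (⋃_{u} m(a(u))) ∪ (⋃_{v} m(b(v)))). -/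

import Mathlib

/-!
Cut `γ` by arc length into `N = ⌈L / ρ⌉` pieces of length at most `ρ`, with waypoints
`γ (τ 0) = p, …, γ (τ N) = q`. Suppose some `A`-sample `aᵢ` lies within `ρ / √2` of the
`A`-coordinate of every inner waypoint and some `B`-sample `bᵢ` within `ρ / √2` of the
`B`-coordinates of both ends of every piece. With `a₀ = p_A` and `a_N = q_A`, the staircase
`p → (a₀, b₀) → (a₁, b₀) → (a₁, b₁) → ⋯ → (a_N, b_{N-1}) → q` then stays in `F`: a vertical
leg lies in the product of the `ρ / √2`-balls around a waypoint, which is inside its `ρ`-ball;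
a horizontal leg runs through the `A`-projection of a piece of `γ`, whose points are within
`ρ / 2` of one of its ends, and `(ρ / 2)² + ρ² / 2 ≤ ρ²`. Each of the fewer than `N`
requirements on the `A`-samples fails with probability at most `(1 - α) ^ nA`, each of the `N`
on the `B`-samples with probability at most `(1 - β) ^ nB`; the union bound gives the estimate.
-/

open Metric MeasureTheory ENNReal

/-- The configuration space `C = A ×₂ B`, the ℓ²-product of two Euclidean spaces. -/
abbrev Csp (k m : ℕ) : Type :=
  WithLp 2 (EuclideanSpace ℝ (Fin k) × EuclideanSpace ℝ (Fin m))

/-- The `A`-component of a point of `C`. -/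
noncomputable def fstC {k m : ℕ} (x : Csp k m) : EuclideanSpace ℝ (Fin k) :=
  (WithLp.equiv 2 _ x).1

/-- The `B`-component of a point of `C`. -/
noncomputable def sndC {k m : ℕ} (x : Csp k m) : EuclideanSpace ℝ (Fin m) :=
  (WithLp.equiv 2 _ x).2

/-- The manifold `m(a) = {a} × B ⊆ C` determined by a point `a ∈ A`. -/
def mA {k m : ℕ} (a : EuclideanSpace ℝ (Fin k)) : Set (Csp k m) :=
  {x | fstC x = a}

/-- The manifold `m(b) = A × {b} ⊆ C` determined by a point `b ∈ B`. -/
def mB {k m : ℕ} (b : EuclideanSpace ℝ (Fin m)) : Set (Csp k m) :=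
  {x | sndC x = b}

open Set

section Variation

variable {α : Type*} [LinearOrder α] {E : Type*} [PseudoMetricSpace E] {f : α → E} {s : Set α}

theorem dist_le_dist_variationOnFromTo (hbv : LocallyBoundedVariationOn f s) {a x y : α}
    (ha : a ∈ s) (hx : x ∈ s) (hy : y ∈ s) :
    dist (f x) (f y) ≤ dist (variationOnFromTo f s a x) (variationOnFromTo f s a y) := by
  wlog hxy : x ≤ y generalizing x y
  · rw [dist_comm, dist_comm (variationOnFromTo f s a x)]
    exact this hy hx (le_of_not_ge hxy)
  rw [Real.dist_eq, abs_sub_comm, variationOnFromTo.sub_right hbv ha hy hx,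
    variationOnFromTo.eq_of_le f s hxy, ENNReal.abs_toReal, dist_edist]
  exact ENNReal.toReal_mono (hbv x y hx hy)
    (eVariationOn.edist_le f ⟨hx, le_rfl, hxy⟩ ⟨hy, hxy, le_rfl⟩)

theorem continuousOn_variationOnFromTo [TopologicalSpace α] [OrderTopology α]
    (hf : ContinuousOn f s) (hbv : LocallyBoundedVariationOn f s) {a : α} (ha : a ∈ s) :
    ContinuousOn (variationOnFromTo f s a) s := by
  intro b hb
  have hleft : ContinuousWithinAt (variationOnFromTo f s a) (s ∩ Iio b) b := by
    have := variationOnFromTo.tendsto_left ha hb hbv ((hf b hb).mono inter_subset_left)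
    rwa [dist_self, sub_zero] at this
  have hright : ContinuousWithinAt (variationOnFromTo f s a) (s ∩ Ioi b) b := by
    have := variationOnFromTo.tendsto_right ha hb hbv ((hf b hb).mono inter_subset_left)
    rwa [dist_self, add_zero] at this
  refine ((hleft.union hright).union continuousWithinAt_singleton).mono fun t ht => ?_
  rcases lt_trichotomy t b with h | rfl | h
  exacts [.inl (.inl ⟨ht, h⟩), .inr rfl, .inl (.inr ⟨ht, h⟩)]

end Variation

theorem exists_partition_dist_add_dist_le {E : Type*} [MetricSpace E] {f : ℝ → E}
    {a b ε : ℝ} {N : ℕ} (hab : a ≤ b) (hε : 0 ≤ ε) (hf : ContinuousOn f (Icc a b))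
    (hV : eVariationOn f (Icc a b) ≤ ENNReal.ofReal (N * ε)) :
    ∃ τ : ℕ → ℝ, (∀ i, τ i ∈ Icc a b) ∧ f (τ 0) = f a ∧ f (τ N) = f b ∧
      ∀ i, ∀ t ∈ uIcc (τ i) (τ (i + 1)),
        dist (f (τ i)) (f t) + dist (f t) (f (τ (i + 1))) ≤ ε := by
  have hbv : LocallyBoundedVariationOn f (Icc a b) :=
    BoundedVariationOn.locallyBoundedVariationOn (ne_top_of_le_ne_top ofReal_ne_top hV)
  have ha : a ∈ Icc a b := left_mem_Icc.2 hab
  have hb : b ∈ Icc a b := right_mem_Icc.2 hab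
  set φ := variationOnFromTo f (Icc a b) a
  have hφa : φ a = 0 := variationOnFromTo.self f _ a
  have hφb : 0 ≤ φ b ∧ φ b ≤ N * ε := by
    refine ⟨variationOnFromTo.nonneg_of_le f _ hab, ?_⟩
    rw [show φ b = _ from variationOnFromTo.eq_of_le f _ hab, inter_self]
    exact ENNReal.toReal_le_of_le_ofReal (by positivity) hV
  -- the partition points are where the arc length `φ` reaches the levels `min (i ε) (φ b)`
  have hlevel : ∀ i : ℕ, ∃ t ∈ Icc a b, φ t = min (i * ε) (φ b) := fun i =>
    intermediate_value_Icc hab (continuousOn_variationOnFromTo hf hbv ha)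
      ⟨hφa.trans_le (le_min (by positivity) hφb.1), min_le_right _ _⟩
  choose τ hτ hφτ using hlevel
  have hdist {x y : ℝ} (hx : x ∈ Icc a b) (hy : y ∈ Icc a b) :
      dist (f x) (f y) ≤ dist (φ x) (φ y) :=
    dist_le_dist_variationOnFromTo hbv ha hx hy
  refine ⟨τ, hτ, ?_, ?_, fun i t ht => ?_⟩
  · refine dist_le_zero.1 ((hdist (hτ 0) ha).trans_eq ?_)
    rw [hφτ, hφa, Nat.cast_zero, zero_mul, min_eq_left hφb.1, dist_self]
  · refine dist_le_zero.1 ((hdist (hτ N) hb).trans_eq ?_)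
    rw [hφτ, min_eq_right hφb.2, dist_self]
  have hts : t ∈ Icc a b := uIcc_subset_Icc (hτ i) (hτ (i + 1)) ht
  have hφt : φ t ∈ segment ℝ (φ (τ i)) (φ (τ (i + 1))) := by
    rw [segment_eq_uIcc]
    exact ((variationOnFromTo.monotoneOn hbv ha).mono
      (uIcc_subset_Icc (hτ i) (hτ (i + 1)))).mapsTo_uIcc ht
  calc dist (f (τ i)) (f t) + dist (f t) (f (τ (i + 1)))
      ≤ dist (φ (τ i)) (φ t) + dist (φ t) (φ (τ (i + 1))) :=
        add_le_add (hdist (hτ i) hts) (hdist hts (hτ (i + 1)))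
    _ = dist (φ (τ i)) (φ (τ (i + 1))) := dist_add_dist_of_mem_segment hφt
    _ ≤ ε := by
      rw [hφτ, hφτ, Real.dist_eq]
      refine (abs_min_sub_min_le_max _ _ _ _).trans (max_le ?_ (by simp [hε]))
      rw [show (i : ℝ) * ε - ↑(i + 1) * ε = -ε by push_cast; ring, abs_neg, abs_of_nonneg hε]

section Joined

variable {X : Type*} [TopologicalSpace X] {U : Set X}

theorem JoinedIn.of_continuousOn_uIcc {g : ℝ → X} {s t : ℝ} (hg : ContinuousOn g (uIcc s t))
    (hU : MapsTo g (uIcc s t) U) : JoinedIn U (g s) (g t) :=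
  ((convex_uIcc s t).isPathConnected nonempty_uIcc |>.image' hg).joinedIn _
    (mem_image_of_mem g left_mem_uIcc) _ (mem_image_of_mem g right_mem_uIcc) |>.mono
    (image_subset_iff.2 hU)

theorem JoinedIn.staircase {A B : Type*} (P : A → B → X) (x : ℕ → A) (y : ℕ → B) (N : ℕ)
    (hv : ∀ i ≤ N, JoinedIn U (P (x i) (y i)) (P (x i) (y (i + 1))))
    (hh : ∀ i < N, JoinedIn U (P (x i) (y (i + 1))) (P (x (i + 1)) (y (i + 1)))) :
    JoinedIn U (P (x 0) (y 0)) (P (x N) (y (N + 1))) := by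
  induction N with
  | zero => exact hv 0 le_rfl
  | succ N ih =>
    exact ((ih (fun i hi => hv i (by omega)) fun i hi => hh i (by omega)).trans
      (hh N N.lt_succ_self)).trans (hv (N + 1) le_rfl)

end Joined

section Geometry

variable {k m : ℕ}

noncomputable def ptC (a : EuclideanSpace ℝ (Fin k)) (b : EuclideanSpace ℝ (Fin m)) :
    Csp k m :=
  (WithLp.equiv 2 _).symm (a, b)

@[simp] lemma fstC_ptC (a : EuclideanSpace ℝ (Fin k)) (b : EuclideanSpace ℝ (Fin m)) :
    fstC (ptC a b) = a := rfl

@[simp] lemma sndC_ptC (a : EuclideanSpace ℝ (Fin k)) (b : EuclideanSpace ℝ (Fin m)) :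
    sndC (ptC a b) = b := rfl

@[simp] lemma ptC_fstC_sndC (x : Csp k m) : ptC (fstC x) (sndC x) = x := rfl

lemma isLinearMap_fstC : IsLinearMap ℝ (fstC : Csp k m → EuclideanSpace ℝ (Fin k)) :=
  ⟨fun _ _ => rfl, fun _ _ => rfl⟩

lemma isLinearMap_sndC : IsLinearMap ℝ (sndC : Csp k m → EuclideanSpace ℝ (Fin m)) :=
  ⟨fun _ _ => rfl, fun _ _ => rfl⟩

lemma continuous_fstC : Continuous (fstC : Csp k m → EuclideanSpace ℝ (Fin k)) :=
  continuous_fst.comp (WithLp.prod_continuous_ofLp 2 _ _)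

lemma continuous_ptC_left (b : EuclideanSpace ℝ (Fin m)) :
    Continuous fun a : EuclideanSpace ℝ (Fin k) => ptC a b :=
  (WithLp.prod_continuous_toLp 2 _ _).comp (continuous_id.prodMk continuous_const)

lemma convex_mA (a : EuclideanSpace ℝ (Fin k)) : Convex ℝ (mA a : Set (Csp k m)) :=
  (convex_singleton a).is_linear_preimage isLinearMap_fstC

lemma convex_mB (b : EuclideanSpace ℝ (Fin m)) : Convex ℝ (mB b : Set (Csp k m)) :=
  (convex_singleton b).is_linear_preimage isLinearMap_sndC

lemma dist_fstC_le (x y : Csp k m) : dist (fstC x) (fstC y) ≤ dist x y := by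
  rw [WithLp.prod_dist_eq_of_L2]
  exact Real.le_sqrt_of_sq_le (le_add_of_nonneg_right (sq_nonneg _))

lemma dist_le_of_dist_fstC_le_of_dist_sndC_le {x y : Csp k m} {d₁ d₂ d : ℝ}
    (h₁ : dist (fstC x) (fstC y) ≤ d₁) (h₂ : dist (sndC x) (sndC y) ≤ d₂)
    (hd : d₁ ^ 2 + d₂ ^ 2 ≤ d ^ 2) (hd₀ : 0 ≤ d) : dist x y ≤ d := by
  rw [WithLp.prod_dist_eq_of_L2, Real.sqrt_le_left hd₀]
  exact (add_le_add (pow_le_pow_left₀ dist_nonneg h₁ 2)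
    (pow_le_pow_left₀ dist_nonneg h₂ 2)).trans hd

def boxC (c : Csp k m) (r : ℝ) : Set (Csp k m) :=
  fstC ⁻¹' closedBall (fstC c) r ∩ sndC ⁻¹' closedBall (sndC c) r

lemma convex_boxC (c : Csp k m) (r : ℝ) : Convex ℝ (boxC c r) :=
  ((convex_closedBall _ r).is_linear_preimage isLinearMap_fstC).inter
    ((convex_closedBall _ r).is_linear_preimage isLinearMap_sndC)

lemma boxC_subset_closedBall (c : Csp k m) {ρ : ℝ} (hρ : 0 ≤ ρ) :
    boxC c (ρ / √2) ⊆ closedBall c ρ := fun x hx =>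
  dist_le_of_dist_fstC_le_of_dist_sndC_le hx.1 hx.2
    (by rw [div_pow, Real.sq_sqrt zero_le_two]; linarith) hρ

lemma ptC_mem_boxC {c : Csp k m} {r : ℝ} {a : EuclideanSpace ℝ (Fin k)}
    {b : EuclideanSpace ℝ (Fin m)} (ha : dist a (fstC c) ≤ r) (hb : dist b (sndC c) ≤ r) :
    ptC a b ∈ boxC c r :=
  ⟨ha, hb⟩

lemma joinedIn_of_mem_boxC {F S M : Set (Csp k m)} {c x y : Csp k m} {ρ : ℝ} (hρ : 0 ≤ ρ)
    (hF : closedBall c ρ ⊆ F) (hS : Convex ℝ S) (hSM : S ⊆ M)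
    (hx : x ∈ boxC c (ρ / √2) ∩ S) (hy : y ∈ boxC c (ρ / √2) ∩ S) :
    JoinedIn (F ∩ M) x y :=
  -- without this, the instance search inside the term below runs out of heartbeats
  haveI : ContinuousSMul ℝ (Csp k m) := inferInstance
  (JoinedIn.of_segment_subset (((convex_boxC c _).inter hS).segment_subset hx hy)).mono
    (inter_subset_inter ((boxC_subset_closedBall c hρ).trans hF) hSM)

variable {F M : Set (Csp k m)} {ρ : ℝ} {γ : ℝ → Csp k m}

theorem joinedIn_mB_along_path {s t : ℝ} (hρ : 0 ≤ ρ) (hγ : ContinuousOn γ (uIcc s t))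
    (hs : closedBall (γ s) ρ ⊆ F) (ht : closedBall (γ t) ρ ⊆ F)
    (hmid : ∀ u ∈ uIcc s t, dist (γ s) (γ u) + dist (γ u) (γ t) ≤ ρ)
    {x₁ x₂ : EuclideanSpace ℝ (Fin k)} {b : EuclideanSpace ℝ (Fin m)}
    (hx₁ : dist x₁ (fstC (γ s)) ≤ ρ / √2) (hx₂ : dist x₂ (fstC (γ t)) ≤ ρ / √2)
    (hbs : dist b (sndC (γ s)) ≤ ρ / √2) (hbt : dist b (sndC (γ t)) ≤ ρ / √2)
    (hbM : mB b ⊆ M) :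
    JoinedIn (F ∩ M) (ptC x₁ b) (ptC x₂ b) := by
  have hseg {c : Csp k m} {x x' : EuclideanSpace ℝ (Fin k)} (hc : closedBall c ρ ⊆ F)
      (hx : dist x (fstC c) ≤ ρ / √2) (hx' : dist x' (fstC c) ≤ ρ / √2)
      (hb : dist b (sndC c) ≤ ρ / √2) : JoinedIn (F ∩ M) (ptC x b) (ptC x' b) :=
    joinedIn_of_mem_boxC hρ hc (convex_mB b) hbM ⟨ptC_mem_boxC hx hb, sndC_ptC x b⟩
      ⟨ptC_mem_boxC hx' hb, sndC_ptC x' b⟩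
  have hcenter {c : Csp k m} : dist (fstC c) (fstC c) ≤ ρ / √2 :=
    (dist_self _).trans_le (by positivity)
  -- along `γ` the `A`-coordinate stays within `ρ / 2` of one of the two waypoints
  have hnear : ∀ u ∈ uIcc s t, ptC (fstC (γ u)) b ∈ F := by
    intro u hu
    have hsq : (ρ / 2) ^ 2 + (ρ / √2) ^ 2 ≤ ρ ^ 2 := by
      rw [div_pow, div_pow, Real.sq_sqrt zero_le_two]; nlinarith [sq_nonneg ρ]
    rcases le_total (dist (γ s) (γ u)) (ρ / 2) with h | h
    · refine hs (dist_le_of_dist_fstC_le_of_dist_sndC_le ?_ hbs hsq hρ)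
      exact (dist_fstC_le (γ u) (γ s)).trans ((dist_comm _ _).trans_le h)
    · refine ht (dist_le_of_dist_fstC_le_of_dist_sndC_le ?_ hbt hsq hρ)
      exact (dist_fstC_le (γ u) (γ t)).trans (by linarith [hmid u hu])
  have hpath : JoinedIn (F ∩ M) (ptC (fstC (γ s)) b) (ptC (fstC (γ t)) b) :=
    JoinedIn.of_continuousOn_uIcc (g := fun u => ptC (fstC (γ u)) b)
      ((continuous_ptC_left b).comp_continuousOn (continuous_fstC.comp_continuousOn hγ))
      fun u hu => ⟨hnear u hu, hbM rfl⟩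
  exact ((hseg hs hx₁ hcenter hbs).trans hpath).trans (hseg ht hcenter hx₂ hbt)

theorem joinedIn_staircase_of_near_waypoints {τ : ℕ → ℝ} {N : ℕ} (hρ : 0 ≤ ρ)
    (hcont : ∀ i, ContinuousOn γ (uIcc (τ i) (τ (i + 1))))
    (hclear : ∀ i, closedBall (γ (τ i)) ρ ⊆ F)
    (hmid : ∀ i, ∀ t ∈ uIcc (τ i) (τ (i + 1)),
      dist (γ (τ i)) (γ t) + dist (γ t) (γ (τ (i + 1))) ≤ ρ)
    (x : ℕ → EuclideanSpace ℝ (Fin k)) (y : ℕ → EuclideanSpace ℝ (Fin m))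
    (hx : ∀ i, dist (x i) (fstC (γ (τ i))) ≤ ρ / √2) (hxM : ∀ i ≤ N, mA (x i) ⊆ M)
    (hy : ∀ i ≤ N, dist (y i) (sndC (γ (τ i))) ≤ ρ / √2)
    (hy' : ∀ i ≤ N, dist (y (i + 1)) (sndC (γ (τ i))) ≤ ρ / √2)
    (hyM : ∀ i < N, mB (y (i + 1)) ⊆ M) :
    JoinedIn (F ∩ M) (ptC (x 0) (y 0)) (ptC (x N) (y (N + 1))) := by
  refine JoinedIn.staircase ptC x y N (fun i hi => ?_) (fun i hi => ?_)
  · exact joinedIn_of_mem_boxC hρ (hclear i) (convex_mA (x i)) (hxM i hi)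
      ⟨ptC_mem_boxC (hx i) (hy i hi), fstC_ptC _ _⟩ ⟨ptC_mem_boxC (hx i) (hy' i hi), fstC_ptC _ _⟩
  · exact joinedIn_mB_along_path hρ (hcont i) (hclear i) (hclear (i + 1)) (hmid i) (hx i)
      (hx (i + 1)) (hy' i hi.le) (hy (i + 1) hi) (hyM i hi)

theorem joinedIn_of_waypoints {τ : ℕ → ℝ} {N : ℕ} (hρ : 0 ≤ ρ)
    (hcont : ∀ i, ContinuousOn γ (uIcc (τ i) (τ (i + 1))))
    (hclear : ∀ i, closedBall (γ (τ i)) ρ ⊆ F)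
    (hmid : ∀ i, ∀ t ∈ uIcc (τ i) (τ (i + 1)),
      dist (γ (τ i)) (γ t) + dist (γ t) (γ (τ (i + 1))) ≤ ρ)
    (hstart : mA (fstC (γ (τ 0))) ⊆ M) (hend : mA (fstC (γ (τ N))) ⊆ M)
    (hA : ∀ i ∈ Finset.Ico 1 N, ∃ a, dist a (fstC (γ (τ i))) ≤ ρ / √2 ∧ mA a ⊆ M)
    (hB : ∀ i ∈ Finset.range N, ∃ b, (dist b (sndC (γ (τ i))) ≤ ρ / √2 ∧
      dist b (sndC (γ (τ (i + 1)))) ≤ ρ / √2) ∧ mB b ⊆ M) :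
    JoinedIn (F ∩ M) (γ (τ 0)) (γ (τ N)) := by
  choose! a ha haM using hA
  choose! b hb hbM using hB
  have hr : 0 ≤ ρ / √2 := by positivity
  let x : ℕ → EuclideanSpace ℝ (Fin k) := fun i =>
    if i ∈ Finset.Ico 1 N then a i else fstC (γ (τ i))
  let y : ℕ → EuclideanSpace ℝ (Fin m)
    | 0 => sndC (γ (τ 0))
    | j + 1 => if j ∈ Finset.range N then b j else sndC (γ (τ N))
  have hstart' : ptC (x 0) (y 0) = γ (τ 0) := by simp [x, y]
  have hend' : ptC (x N) (y (N + 1)) = γ (τ N) := by simp [x, y]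
  rw [← hstart', ← hend']
  refine joinedIn_staircase_of_near_waypoints hρ hcont hclear hmid x y (fun i => ?_)
    (fun i hi => ?_) (fun i hi => ?_) (fun i hi => ?_) (fun i hi => ?_)
  · dsimp only [x]
    split_ifs with h
    exacts [ha i h, (dist_self _).trans_le hr]
  · dsimp only [x]
    split_ifs with h
    · exact haM i h
    · obtain rfl | rfl : i = 0 ∨ i = N := by simp at h; omega
      exacts [hstart, hend]
  · rcases i with _ | j
    · exact (dist_self _).trans_le hr
    · simp only [y, Finset.mem_range, if_pos (show j < N by omega)]
      exact (hb j (Finset.mem_range.2 (by omega))).2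
  · simp only [y]
    split_ifs with h
    · exact (hb i h).1
    · obtain rfl : i = N := by simp at h; omega
      exact (dist_self _).trans_le hr
  · simp only [y, if_pos (Finset.mem_range.2 hi)]
    exact hbM i (Finset.mem_range.2 hi)

end Geometry

section Sampling

variable {X ι : Type*} [MeasurableSpace X]

def hitsAll {n : ℕ} (I : Finset ι) (S : ι → Set X) : Set (Fin n → X) :=
  {a | ∀ i ∈ I, ∃ u, a u ∈ S i}

theorem measurableSet_hitsAll {n : ℕ} (I : Finset ι) {S : ι → Set X}
    (hS : ∀ i ∈ I, MeasurableSet (S i)) : MeasurableSet (hitsAll (n := n) I S) := by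
  simp only [hitsAll, ofPred_forall, ofPred_exists]
  exact .biInter I.countable_toSet fun i hi => .iUnion fun u => measurable_pi_apply u (hS i hi)

theorem measure_pi_setOf_forall_notMem_le (μ : Measure X) [IsProbabilityMeasure μ] (n : ℕ)
    {S : Set X} (hS : MeasurableSet S) {α : ℝ≥0∞} (hα : α ≤ μ S) :
    (Measure.pi fun _ : Fin n => μ) {a | ∀ u, a u ∉ S} ≤ (1 - α) ^ n := by
  have hset : {a : Fin n → X | ∀ u, a u ∉ S} = Set.pi univ fun _ => Sᶜ := by
    ext a; simp [Set.mem_pi]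
  rw [hset, Measure.pi_pi, Finset.prod_const, Finset.card_univ, Fintype.card_fin,
    prob_compl_eq_one_sub hS]
  gcongr

theorem measure_compl_hitsAll_le (μ : Measure X) [IsProbabilityMeasure μ] (n : ℕ)
    (I : Finset ι) {S : ι → Set X} (hS : ∀ i ∈ I, MeasurableSet (S i)) {α : ℝ≥0∞}
    (hα : ∀ i ∈ I, α ≤ μ (S i)) :
    (Measure.pi fun _ : Fin n => μ) (hitsAll I S)ᶜ ≤ I.card * (1 - α) ^ n := by
  have hset : (hitsAll I S)ᶜ = ⋃ i ∈ I, {a : Fin n → X | ∀ u, a u ∉ S i} := by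
    ext a; simp [hitsAll]
  rw [hset, ← nsmul_eq_mul, ← Finset.sum_const]
  exact (measure_biUnion_finset_le _ _).trans <| Finset.sum_le_sum fun i hi =>
    measure_pi_setOf_forall_notMem_le μ n (hS i hi) (hα i hi)

theorem one_sub_add_le_prod_prod {Y : Type*} [MeasurableSpace Y] {μ : Measure X} {ν : Measure Y}
    [IsProbabilityMeasure μ] [IsProbabilityMeasure ν] {s : Set X} {t : Set Y}
    (hs : MeasurableSet s) (ht : MeasurableSet t) {a b : ℝ≥0∞}
    (ha : μ sᶜ ≤ a) (hb : ν tᶜ ≤ b) :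
    1 - (a + b) ≤ μ.prod ν (s ×ˢ t) := by
  have hcompl : μ.prod ν (s ×ˢ t)ᶜ ≤ a + b := by
    rw [compl_prod_eq_union]
    refine (measure_union_le _ _).trans ?_
    rw [Measure.prod_prod, Measure.prod_prod, measure_univ, measure_univ, mul_one, one_mul]
    exact add_le_add ha hb
  rw [← compl_compl (s ×ˢ t), prob_compl_eq_one_sub (hs.prod ht).compl]
  exact tsub_le_tsub_left hcompl 1

end Sampling

theorem stmt6_general (k m : ℕ) (F : Set (Csp k m)) (ρ L : ℝ) (hρ : 0 < ρ)
    (p q : Csp k m) (γ : ℝ → Csp k m)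
    (hcont : ContinuousOn γ (Set.Icc 0 1)) (h0 : γ 0 = p) (h1 : γ 1 = q)
    (hclear : ∀ t ∈ Set.Icc (0 : ℝ) 1, closedBall (γ t) ρ ⊆ F)
    (hlen : eVariationOn γ (Set.Icc 0 1) ≤ ENNReal.ofReal L)
    (μ : Measure (EuclideanSpace ℝ (Fin k))) (ν : Measure (EuclideanSpace ℝ (Fin m)))
    [IsProbabilityMeasure μ] [IsProbabilityMeasure ν]
    (α β : ℝ≥0∞)
    (hμ : ∀ t ∈ Set.Icc (0 : ℝ) 1, α ≤ μ (closedBall (fstC (γ t)) (ρ / Real.sqrt 2)))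
    (hν : ∀ t ∈ Set.Icc (0 : ℝ) 1, ∀ s ∈ Set.Icc (0 : ℝ) 1, dist (γ t) (γ s) ≤ ρ →
      β ≤ ν (closedBall (sndC (γ t)) (ρ / Real.sqrt 2) ∩
             closedBall (sndC (γ s)) (ρ / Real.sqrt 2)))
    (nA nB : ℕ) :
    ∃ E : Set ((Fin nA → EuclideanSpace ℝ (Fin k)) × (Fin nB → EuclideanSpace ℝ (Fin m))),
      MeasurableSet E ∧
      1 - (⌈L / ρ⌉₊ : ℝ≥0∞) * ((1 - α) ^ nA + (1 - β) ^ nB) ≤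
        ((Measure.pi fun _ : Fin nA => μ).prod (Measure.pi fun _ : Fin nB => ν)) E ∧
      ∀ ω ∈ E, ∃ δ : Path p q, ∀ t, δ t ∈
        F ∩ (mA (fstC p) ∪ mA (fstC q) ∪ (⋃ u, mA (ω.1 u)) ∪ ⋃ v, mB (ω.2 v)) := by
  set N := ⌈L / ρ⌉₊
  obtain ⟨τ, hτ, hτ0, hτN, hmid⟩ := exists_partition_dist_add_dist_le zero_le_one hρ.le hcont
    (hlen.trans (ofReal_le_ofReal ((div_le_iff₀ hρ).1 (Nat.le_ceil (L / ρ)))))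
  let SA : ℕ → Set (EuclideanSpace ℝ (Fin k)) := fun i => closedBall (fstC (γ (τ i))) (ρ / √2)
  let SB : ℕ → Set (EuclideanSpace ℝ (Fin m)) := fun i =>
    closedBall (sndC (γ (τ i))) (ρ / √2) ∩ closedBall (sndC (γ (τ (i + 1)))) (ρ / √2)
  have hSA : ∀ i ∈ Finset.Ico 1 N, MeasurableSet (SA i) := fun _ _ => measurableSet_closedBall
  have hSB : ∀ i ∈ Finset.range N, MeasurableSet (SB i) := fun _ _ =>
    measurableSet_closedBall.inter measurableSet_closedBall
  have hEA := measurableSet_hitsAll (n := nA) _ hSA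
  have hEB := measurableSet_hitsAll (n := nB) _ hSB
  refine ⟨_, hEA.prod hEB, ?_, ?_⟩
  · refine le_trans ?_ (one_sub_add_le_prod_prod hEA hEB
      (measure_compl_hitsAll_le μ nA _ hSA fun i _ => hμ _ (hτ i))
      (measure_compl_hitsAll_le ν nB _ hSB fun i _ =>
        hν _ (hτ i) _ (hτ (i + 1)) (by simpa using hmid i (τ i) left_mem_uIcc)))
    rw [mul_add]
    gcongr <;> simp
  · rintro ⟨a, b⟩ ⟨ha, hb⟩
    rw [← h0, ← h1, ← hτ0, ← hτN]
    refine joinedIn_of_waypoints hρ.le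
      (fun i => hcont.mono (uIcc_subset_Icc (hτ i) (hτ (i + 1)))) (fun i => hclear _ (hτ i))
      hmid ?_ ?_ (fun i hi => ?_) (fun i hi => ?_)
    · rw [hτ0, h0]
      exact fun z hz => by simp [hz]
    · rw [hτN, h1]
      exact fun z hz => by simp [hz]
    · obtain ⟨u, hu⟩ := ha i hi
      exact ⟨a u, hu, fun z hz => by simp only [mem_union, mem_iUnion]; tauto⟩
    · obtain ⟨v, hv⟩ := hb i hi
      exact ⟨b v, hv, fun z hz => by simp only [mem_union, mem_iUnion]; tauto⟩

/-- Probabilistic completeness of MMS: if there is a path `γ` from `p` to `q` of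
length at most `L` and clearance `ρ` inside the free space `F`, and the sampling
measures `μ`, `ν` put mass at least `α` on every ball of radius `ρ/√2` around an
`A`-projection of a path point, resp. at least `β` on every intersection of balls of
radius `ρ/√2` around `B`-projections of path points at distance at most `ρ`, then
with probability at least `1 - ⌈L/ρ⌉·((1-α)^nA + (1-β)^nB)` the i.i.d. samples,
together with the manifolds `m(p_A)` and `m(q_A)`, carry a continuous path from `p`
to `q` inside `F`. -/
theorem stmt6 (k m : ℕ) (F : Set (Csp k m)) (ρ L : ℝ) (hρ : 0 < ρ) (hL : 0 < L)
    (p q : Csp k m) (γ : ℝ → Csp k m)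
    (hcont : ContinuousOn γ (Set.Icc 0 1)) (h0 : γ 0 = p) (h1 : γ 1 = q)
    (hclear : ∀ t ∈ Set.Icc (0 : ℝ) 1, closedBall (γ t) ρ ⊆ F)
    (hlen : eVariationOn γ (Set.Icc 0 1) ≤ ENNReal.ofReal L)
    (μ : Measure (EuclideanSpace ℝ (Fin k))) (ν : Measure (EuclideanSpace ℝ (Fin m)))
    [IsProbabilityMeasure μ] [IsProbabilityMeasure ν]
    (α β : ℝ≥0∞) (hα0 : 0 < α) (hα1 : α ≤ 1) (hβ0 : 0 < β) (hβ1 : β ≤ 1)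
    (hμ : ∀ t ∈ Set.Icc (0 : ℝ) 1, α ≤ μ (closedBall (fstC (γ t)) (ρ / Real.sqrt 2)))
    (hν : ∀ t ∈ Set.Icc (0 : ℝ) 1, ∀ s ∈ Set.Icc (0 : ℝ) 1, dist (γ t) (γ s) ≤ ρ →
      β ≤ ν (closedBall (sndC (γ t)) (ρ / Real.sqrt 2) ∩
             closedBall (sndC (γ s)) (ρ / Real.sqrt 2)))
    (nA nB : ℕ) :
    ∃ E : Set ((Fin nA → EuclideanSpace ℝ (Fin k)) × (Fin nB → EuclideanSpace ℝ (Fin m))),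
      MeasurableSet E ∧
      1 - (⌈L / ρ⌉₊ : ℝ≥0∞) * ((1 - α) ^ nA + (1 - β) ^ nB) ≤
        ((Measure.pi fun _ : Fin nA => μ).prod (Measure.pi fun _ : Fin nB => ν)) E ∧
      ∀ ω ∈ E, ∃ δ : Path p q, ∀ t, δ t ∈
        F ∩ (mA (fstC p) ∪ mA (fstC q) ∪ (⋃ u, mA (ω.1 u)) ∪ ⋃ v, mB (ω.2 v)) :=
  stmt6_general k m F ρ L hρ p q γ hcont h0 h1 hclear hlen μ ν α β hμ hν nA nB
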